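/- The map phi_{27,γ} = [γx²y : γxy² : (x+y)(x+γy)z] (with γ ≠ 0,1) is equivalent to phi_{27,γ'} (γ' ≠ 0,1) under pre- and post-composition with automorphisms of P² if and only if γ' = γ or γ' = 1/γ. In particular, the automorphism alpha([x:y:z]) = [y:x:-z] conjugates the base configuration of phi_{27,γ} to that of phi_{27,1/γ}. -/

import Mathlib

/-- The homaloidal triple of cubics defining the plane Cremona map
`φ₂₇,γ = [γx²y : γxy² : (x+y)(x+γy)z]`. -/
noncomputable def F27 (γ : ℂ) (v : Fin 3 → ℂ) : Fin 3 → ℂ :=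
  ![γ * (v 0) ^ 2 * v 1,
    γ * v 0 * (v 1) ^ 2,
    (v 0 + v 1) * (v 0 + γ * v 1) * v 2]

/-- `φ₂₇,γ'` is equivalent to `φ₂₇,γ`, i.e. `φ₂₇,γ' = α' ∘ φ₂₇,γ ∘ α` for automorphisms
`α, α'` of `ℙ²`: there are invertible matrices `M, M'` and a nonzero scalar `c` with
`F₂₇,γ' = c · M' ∘ F₂₇,γ ∘ M` (two reduced homogeneous triples of the same degree define
the same map of `ℙ²` iff they are proportional). -/
def Equiv27 (γ γ' : ℂ) : Prop :=
  ∃ (M M' : Matrix.GeneralLinearGroup (Fin 3) ℂ) (c : ℂ), c ≠ 0 ∧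
    ∀ v : Fin 3 → ℂ,
      F27 γ' v =
        c • (M' : Matrix (Fin 3) (Fin 3) ℂ).mulVec
          (F27 γ ((M : Matrix (Fin 3) (Fin 3) ℂ).mulVec v))

/-- The matrix of the automorphism `α([x:y:z]) = [y:x:-z]`. -/
def alphaMat : Matrix (Fin 3) (Fin 3) ℂ :=
  !![0, 1, 0; 1, 0, 0; 0, 0, -1]

/-!
An equivalence `F₂₇,γ' = c · M' ∘ F₂₇,γ ∘ M` carries the base locus to the base locus. The zero
set of `F₂₇,γ` is the union of the coordinate axes (the cones over `p0, p1, p2`), so `M` is monomial.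
`M` cannot send `p1` or `p2` to the double point `p0`: every `F₂₇` is affine in `z`, and this would
force the tangent cone `(x + y)(x + γy)` of `F₂₇,γ` at `p0` to vanish at a point of a coordinate axis
other than `p0`. So `M` fixes `p0` and permutes `{p1, p2}`, and comparing `z`-coefficients shows that
the tangent cone `(x + y)(x + γ'y)` at `p0` is proportional to `(ax + by)(ax + γby)` or to its
swap; matching the roots (the directions `p3, p4`) gives `γ' = γ` or `γ' = 1/γ`.
-/

open Matrix

lemma F27_single (γ : ℂ) (j : Fin 3) (t : ℂ) : F27 γ (Pi.single j t) = 0 := by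
  ext i; fin_cases j <;> fin_cases i <;> simp [F27]

/-- The points of `ℂ³` over the base points `p0, p1, p2`. -/
def OnCoordAxis (v : Fin 3 → ℂ) : Prop :=
  (v 0 = 0 ∧ v 1 = 0) ∨ (v 0 = 0 ∧ v 2 = 0) ∨ (v 1 = 0 ∧ v 2 = 0)

lemma onCoordAxis_of_F27_eq_zero {γ : ℂ} (hγ : γ ≠ 0) {v : Fin 3 → ℂ} (h : F27 γ v = 0) :
    OnCoordAxis v := by
  unfold OnCoordAxis
  have h0 := congrFun h 0
  have h2 := congrFun h 2
  simp [F27, hγ] at h0 h2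
  rcases h0 with h0 | h0 <;> rcases h2 with (h2 | h2) | h2 <;> simp_all

lemma F27_add_single_two_add_F27_sub_single_two (γ : ℂ) (v : Fin 3 → ℂ) (t : ℂ) :
    F27 γ (v + Pi.single 2 t) + F27 γ (v - Pi.single 2 t) = (2 : ℂ) • F27 γ v := by
  ext i; fin_cases i <;> simp [F27] <;> ring

lemma F27_add_add_F27_sub_of_zAxis (γ : ℂ) {u : Fin 3 → ℂ} (h0 : u 0 = 0) (h1 : u 1 = 0)
    (w : Fin 3 → ℂ) :
    F27 γ (u + w) + F27 γ (u - w) =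
      Pi.single 2 (2 * u 2 * ((w 0 + w 1) * (w 0 + γ * w 1))) := by
  ext i; fin_cases i <;> simp [F27, h0, h1]; ring

lemma eq_or_eq_inv_of_forall_mul_eq {γ γ' κ a b : ℂ}
    (h : ∀ x y, (x + y) * (x + γ' * y) = κ * ((a * x + b * y) * (a * x + γ * b * y))) :
    γ' = γ ∨ γ' = γ⁻¹ := by
  have h10 := h 1 0
  have h01 := h 0 1
  have h11 := h 1 (-1)
  simp only [mul_zero, add_zero, mul_one, zero_add, one_mul, mul_neg] at h10 h01 h11
  have hab : κ * ((a - b) * (a - γ * b)) = 0 := by linear_combination -h11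
  rcases mul_eq_zero.mp hab with hκ | hab
  · simp [hκ] at h10
  rcases mul_eq_zero.mp hab with hab | hab
  · left; linear_combination h01 - γ * h10 - κ * γ * (a + b) * hab
  · right
    refine eq_inv_of_mul_eq_one_left ?_
    linear_combination γ * h01 - h10 - κ * (a + γ * b) * hab

lemma F27_mulVec_eq_of_forall_eq_smul_mulVec {γ γ' c : ℂ} (hc : c ≠ 0)
    {M M' : GL (Fin 3) ℂ}
    (H : ∀ v, F27 γ' v = c • (M' : Matrix (Fin 3) (Fin 3) ℂ) *ᵥ F27 γ ((M : Matrix _ _ ℂ) *ᵥ v))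
    (v : Fin 3 → ℂ) :
    F27 γ ((M : Matrix _ _ ℂ) *ᵥ v) = (c⁻¹ • (↑M'⁻¹ : Matrix (Fin 3) (Fin 3) ℂ)) *ᵥ F27 γ' v := by
  rw [H v, smul_mulVec, mulVec_smul, mulVec_mulVec, ← Units.val_mul, inv_mul_cancel,
    Units.val_one, one_mulVec, smul_smul, inv_mul_cancel₀ hc, one_smul]

section

variable {γ γ' c : ℂ} {A B N : Matrix (Fin 3) (Fin 3) ℂ}

lemma onCoordAxis_col (hγ : γ ≠ 0) (hN : ∀ v, F27 γ (A *ᵥ v) = N *ᵥ F27 γ' v) (j : Fin 3) :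
    OnCoordAxis fun i => A i j := by
  have h : A *ᵥ Pi.single j 1 = fun i => A i j := mulVec_single_one A j
  exact h ▸ onCoordAxis_of_F27_eq_zero hγ (by rw [hN, F27_single, mulVec_zero])

/-- `A` does not send `p1` or `p2` to `p0`: otherwise, `F₂₇,γ'` being affine in `z`, the tangent
cone of `F₂₇,γ` at `p0` would vanish at the image of `p0`, a point of another coordinate axis. -/
lemma entry_two_eq_zero (hγ : γ ≠ 0) (hdet : A.det ≠ 0)
    (hN : ∀ v, F27 γ (A *ᵥ v) = N *ᵥ F27 γ' v) {j : Fin 3} (hj : j ≠ 2) : A 2 j = 0 := by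
  by_contra h2j
  obtain ⟨h0j, h1j⟩ : A 0 j = 0 ∧ A 1 j = 0 := by
    simpa [OnCoordAxis, h2j] using onCoordAxis_col hγ hN j
  have hcone : A 2 j * ((A 0 2 + A 1 2) * (A 0 2 + γ * A 1 2)) = 0 := by
    have h := congrFun (F27_add_add_F27_sub_of_zAxis γ (u := A *ᵥ Pi.single j 1)
      (by simpa [mulVec_single_one] using h0j) (by simpa [mulVec_single_one] using h1j)
      (A *ᵥ Pi.single 2 1)) 2
    rw [← mulVec_add, ← mulVec_sub, hN, hN, ← mulVec_add,
      F27_add_single_two_add_F27_sub_single_two, F27_single] at h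
    simpa [mulVec_single_one] using h
  have hcone' := (mul_eq_zero.mp hcone).resolve_left h2j
  rcases onCoordAxis_col hγ hN 2 with ⟨h02, h12⟩ | ⟨h02, h22⟩ | ⟨h12, h22⟩
  · fin_cases j <;> simp_all [det_fin_three]
  · have h12 : A 1 2 = 0 := by simpa [h02, hγ] using hcone'
    simp [det_fin_three, h02, h12, h22] at hdet
  · have h02 : A 0 2 = 0 := by simpa [h12] using hcone'
    simp [det_fin_three, h02, h12, h22] at hdet

lemma forall_mul_eq_of_block_diagonal
    (H : ∀ v, F27 γ' v = c • B *ᵥ F27 γ (A *ᵥ v))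
    (h02 : A 0 2 = 0) (h12 : A 1 2 = 0) (h20 : A 2 0 = 0) (h21 : A 2 1 = 0) (x y : ℂ) :
    (x + y) * (x + γ' * y) = c * B 2 2 * A 2 2 *
      ((A 0 0 * x + A 0 1 * y + (A 1 0 * x + A 1 1 * y)) *
        (A 0 0 * x + A 0 1 * y + γ * (A 1 0 * x + A 1 1 * y))) := by
  have h1 := congrFun (H ![x, y, 1]) 2
  have h0 := congrFun (H ![x, y, 0]) 2
  simp only [F27, mulVec, dotProduct, Fin.sum_univ_three, Pi.smul_apply, smul_eq_mul,
    cons_val_zero, cons_val_one, cons_val_two, head_cons, tail_cons, h02, h12, h20, h21] at h0 h1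
  linear_combination h1 - h0

lemma eq_or_eq_inv_of_forall_eq_smul_mulVec (hγ : γ ≠ 0) (hdet : A.det ≠ 0) (hN : ∀ v, F27 γ (A *ᵥ v) = N *ᵥ F27 γ' v)
    (H : ∀ v, F27 γ' v = c • B *ᵥ F27 γ (A *ᵥ v)) :
    γ' = γ ∨ γ' = γ⁻¹ := by
  have h20 := entry_two_eq_zero hγ hdet hN (j := 0) (by decide)
  have h21 := entry_two_eq_zero hγ hdet hN (j := 1) (by decide)
  have h22 : A 2 2 ≠ 0 := fun h => hdet (by simp [det_fin_three, h20, h21, h])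
  obtain ⟨h02, h12⟩ : A 0 2 = 0 ∧ A 1 2 = 0 := by
    simpa [OnCoordAxis, h22] using onCoordAxis_col hγ hN 2
  have hblock : A 0 0 * A 1 1 - A 0 1 * A 1 0 ≠ 0 := fun h => hdet (by
    rw [det_fin_three, h02, h12, h20, h21]; linear_combination A 2 2 * h)
  have hcol0 : A 0 0 = 0 ∨ A 1 0 = 0 := by
    rcases onCoordAxis_col hγ hN 0 with h | h | h <;> simp [h.1]
  have hcol1 : A 0 1 = 0 ∨ A 1 1 = 0 := by
    rcases onCoordAxis_col hγ hN 1 with h | h | h <;> simp [h.1]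
  have hform := forall_mul_eq_of_block_diagonal H h02 h12 h20 h21
  rcases hcol0 with h00 | h10
  · have h11 : A 1 1 = 0 := hcol1.resolve_left fun h01 => hblock (by simp [h00, h01])
    -- swapping `p1` and `p2` replaces `γ` by `γ⁻¹`
    have := eq_or_eq_inv_of_forall_mul_eq (γ := γ⁻¹) (κ := c * B 2 2 * A 2 2 * γ)
      (a := A 1 0) (b := A 0 1) fun x y => by rw [hform, h00, h11]; field_simp; ring
    rwa [inv_inv, or_comm] at this
  · have h01 : A 0 1 = 0 := hcol1.resolve_right fun h11 => hblock (by simp [h10, h11])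
    exact eq_or_eq_inv_of_forall_mul_eq (κ := c * B 2 2 * A 2 2) (a := A 0 0) (b := A 1 1)
      fun x y => by rw [hform, h01, h10]; ring

end

lemma eq_or_eq_inv_of_equiv27 {γ γ' : ℂ} (hγ : γ ≠ 0) (h : Equiv27 γ γ') :
    γ' = γ ∨ γ' = γ⁻¹ := by
  obtain ⟨M, M', c, hc, H⟩ := h
  refine eq_or_eq_inv_of_forall_eq_smul_mulVec hγ ?_
    (F27_mulVec_eq_of_forall_eq_smul_mulVec hc H) H
  rw [← GeneralLinearGroup.val_det_apply]
  exact Units.ne_zero _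

lemma exists_F27_inv_eq_smul_mulVec_F27_alphaMat {γ : ℂ} (hγ : γ ≠ 0) :
    ∃ (M' : GL (Fin 3) ℂ) (c : ℂ), c ≠ 0 ∧ ∀ v : Fin 3 → ℂ,
      F27 γ⁻¹ v = c • (M' : Matrix (Fin 3) (Fin 3) ℂ) *ᵥ F27 γ (alphaMat *ᵥ v) := by
  refine ⟨GeneralLinearGroup.mkOfDetNeZero !![0, 1, 0; 1, 0, 0; 0, 0, -γ]
    (by simp [det_fin_three, hγ]), (γ ^ 2)⁻¹, by simp [hγ], fun v => ?_⟩
  ext i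
  fin_cases i <;> simp [F27, alphaMat, mulVec, dotProduct, Fin.sum_univ_three] <;> field_simp
  ring

lemma equiv27_refl (γ : ℂ) : Equiv27 γ γ :=
  ⟨1, 1, 1, one_ne_zero, fun v => by simp⟩

lemma equiv27_inv {γ : ℂ} (hγ : γ ≠ 0) : Equiv27 γ γ⁻¹ := by
  obtain ⟨M', c, hc, h⟩ := exists_F27_inv_eq_smul_mulVec_F27_alphaMat hγ
  exact ⟨GeneralLinearGroup.mkOfDetNeZero alphaMat (by simp [alphaMat, det_fin_three]),
    M', c, hc, h⟩

theorem stmt18_general (γ γ' : ℂ) (hγ0 : γ ≠ 0) :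
    (Equiv27 γ γ' ↔ (γ' = γ ∨ γ' = 1 / γ)) ∧
    (∃ (M' : Matrix.GeneralLinearGroup (Fin 3) ℂ) (c : ℂ), c ≠ 0 ∧
      ∀ v : Fin 3 → ℂ,
        F27 (1 / γ) v =
          c • (M' : Matrix (Fin 3) (Fin 3) ℂ).mulVec (F27 γ (alphaMat.mulVec v))) := by
  simp only [one_div]
  refine ⟨⟨eq_or_eq_inv_of_equiv27 hγ0, ?_⟩, exists_F27_inv_eq_smul_mulVec_F27_alphaMat hγ0⟩
  rintro (rfl | rfl)
  · exact equiv27_refl _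
  · exact equiv27_inv hγ0

/-- For `γ, γ' ≠ 0, 1`, the map `φ₂₇,γ'` is equivalent to `φ₂₇,γ` if and only if
`γ' = γ` or `γ' = 1/γ`.  In particular the automorphism `α([x:y:z]) = [y:x:-z]`
realizes the equivalence between `φ₂₇,γ` and `φ₂₇,1/γ` (conjugating the base
configurations): precomposing `φ₂₇,γ` with `α` gives `φ₂₇,1/γ` up to a linear
automorphism and a scalar. -/
theorem stmt18 (γ γ' : ℂ) (hγ0 : γ ≠ 0) (hγ1 : γ ≠ 1) (hγ'0 : γ' ≠ 0) (hγ'1 : γ' ≠ 1) :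
    (Equiv27 γ γ' ↔ (γ' = γ ∨ γ' = 1 / γ)) ∧
    (∃ (M' : Matrix.GeneralLinearGroup (Fin 3) ℂ) (c : ℂ), c ≠ 0 ∧
      ∀ v : Fin 3 → ℂ,
        F27 (1 / γ) v =
          c • (M' : Matrix (Fin 3) (Fin 3) ℂ).mulVec (F27 γ (alphaMat.mulVec v))) :=
  stmt18_general γ γ' hγ0
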